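/- Let K be a differential field of characteristic zero and t a primitive generator over K. If f ∈ K(t) is both t-proper and a logarithmic derivative (f = g′/g for some nonzero g ∈ K(t)), then f is t-simple, i.e., its denominator is squarefree. -/

import Mathlib

/-!
Write `g = A(t)/B(t)`. On `K[X]` the derivation becomes `implicitDeriv (C t′)`, that is
`p ↦ pᵟ + t′ · p'` where `pᵟ` applies `δ` to the coefficients. Apart from `c · p` with
`c = lc(p)′/lc(p)` it lowers degrees, so `p(t)′/p(t)` is `c ∈ K` plus a proper fraction with
denominator `p`, squarefree when `p` is irreducible. Log derivatives turn products into sums and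
simple fractions are closed under addition, so `g′/g = c + h` with `c ∈ K` and `h` simple. Both
`g′/g` and `h` are proper, hence so is `c`, which forces `c = 0`.
-/

open Polynomial
open scoped Differential

theorem Polynomial.degree_mul_lt_of_degree_lt {R : Type*} [Semiring R] [NoZeroDivisors R]
    {p q m : R[X]} (hpq : p.degree < q.degree) (hm : m ≠ 0) :
    (p * m).degree < (q * m).degree := by
  rw [degree_mul, degree_mul]
  exact WithBot.add_lt_add_right (degree_ne_bot.mpr hm) hpq

theorem aeval_ne_zero_of_transcendental {R A : Type*} [CommRing R] [Ring A] [Algebra R A] {x : A}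
    (hx : Transcendental R x) {p : R[X]} (hp : p ≠ 0) : aeval x p ≠ 0 :=
  fun h => hp (transcendental_iff.mp hx p h)

def Derivation.ofLeibniz {R : Type*} [CommRing R] (δ : R → R)
    (hadd : ∀ a b, δ (a + b) = δ a + δ b) (hmul : ∀ a b, δ (a * b) = δ a * b + a * δ b) :
    Derivation ℤ R R :=
  Derivation.mk' (AddMonoidHom.mk' δ hadd).toIntLinearMap fun a b => by
    simp only [AddMonoidHom.coe_toIntLinearMap, AddMonoidHom.mk'_apply, hmul, smul_eq_mul]
    ring

section Fractions

variable {K F : Type*} [Field K] [Field F] [Algebra K F] {t : F}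

theorem exists_add_eq_aeval_div (ht : Transcendental K t) {p₁ q₁ p₂ q₂ l : K[X]}
    (h₁ : p₁.degree < q₁.degree) (h₂ : p₂.degree < q₂.degree) (hl : l ≠ 0)
    (hq₁ : q₁ ∣ l) (hq₂ : q₂ ∣ l) :
    ∃ p : K[X], p.degree < l.degree ∧
      aeval t p₁ / aeval t q₁ + aeval t p₂ / aeval t q₂ = aeval t p / aeval t l := by
  obtain ⟨m₁, hm₁⟩ := hq₁
  obtain ⟨m₂, hm₂⟩ := hq₂
  have hm₁0 := right_ne_zero_of_mul (hm₁ ▸ hl)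
  have hm₂0 := right_ne_zero_of_mul (hm₂ ▸ hl)
  refine ⟨p₁ * m₁ + p₂ * m₂, (degree_add_le _ _).trans_lt (max_lt ?_ ?_), ?_⟩
  · exact hm₁ ▸ degree_mul_lt_of_degree_lt h₁ hm₁0
  · exact hm₂ ▸ degree_mul_lt_of_degree_lt h₂ hm₂0
  · have hl₁ : aeval t l = aeval t q₁ * aeval t m₁ := by rw [hm₁, map_mul]
    have hl₂ : aeval t l = aeval t q₂ * aeval t m₂ := by rw [hm₂, map_mul]
    rw [map_add, add_div, map_mul, hl₁,
      mul_div_mul_right _ _ (aeval_ne_zero_of_transcendental ht hm₁0), ← hl₁, map_mul, hl₂,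
      mul_div_mul_right _ _ (aeval_ne_zero_of_transcendental ht hm₂0)]

def properFractions (ht : Transcendental K t) : AddSubgroup F where
  carrier := {f | ∃ p q : K[X], q ≠ 0 ∧ p.degree < q.degree ∧ f = aeval t p / aeval t q}
  zero_mem' := ⟨0, 1, one_ne_zero, by simp, by simp⟩
  neg_mem' := by
    rintro _ ⟨p, q, hq, hpq, rfl⟩
    exact ⟨-p, q, hq, by rwa [degree_neg], by rw [map_neg, neg_div]⟩
  add_mem' := by
    rintro _ _ ⟨p₁, q₁, hq₁, h₁, rfl⟩ ⟨p₂, q₂, hq₂, h₂, rfl⟩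
    obtain ⟨p, hp, he⟩ := exists_add_eq_aeval_div ht h₁ h₂ (mul_ne_zero hq₁ hq₂)
      (dvd_mul_right q₁ q₂) (dvd_mul_left q₂ q₁)
    exact ⟨p, q₁ * q₂, mul_ne_zero hq₁ hq₂, hp, he⟩

open UniqueFactorizationMonoid in
def simpleFractions (ht : Transcendental K t) : AddSubgroup F where
  carrier := {f | ∃ p q : K[X], q ≠ 0 ∧ p.degree < q.degree ∧ Squarefree q ∧
    f = aeval t p / aeval t q}
  zero_mem' := ⟨0, 1, one_ne_zero, by simp, squarefree_one, by simp⟩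
  neg_mem' := by
    rintro _ ⟨p, q, hq, hpq, hsq, rfl⟩
    exact ⟨-p, q, hq, by rwa [degree_neg], hsq, by rw [map_neg, neg_div]⟩
  add_mem' := by
    classical
    rintro _ _ ⟨p₁, q₁, hq₁, h₁, hsq₁, rfl⟩ ⟨p₂, q₂, hq₂, h₂, hsq₂, rfl⟩
    have hq := mul_ne_zero hq₁ hq₂
    have hrad : radical (q₁ * q₂) ≠ 0 := radical_ne_zero
    obtain ⟨p, hp, he⟩ := exists_add_eq_aeval_div ht h₁ h₂ hrad
      ((dvd_radical_iff hsq₁.isRadical hq).mpr (dvd_mul_right q₁ q₂))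
      ((dvd_radical_iff hsq₂.isRadical hq).mpr (dvd_mul_left q₂ q₁))
    exact ⟨p, _, hrad, hp, squarefree_radical, he⟩

theorem simpleFractions_le_properFractions (ht : Transcendental K t) :
    simpleFractions ht ≤ properFractions ht :=
  fun _ ⟨p, q, hq, hpq, _, he⟩ => ⟨p, q, hq, hpq, he⟩

theorem eq_zero_of_algebraMap_mem_properFractions (ht : Transcendental K t) {c : K}
    (hc : algebraMap K F c ∈ properFractions ht) : c = 0 := by
  obtain ⟨p, q, hq, hpq, he⟩ := hc
  have hpoly : C c * q = p := by
    apply transcendental_iff_injective.mp ht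
    rw [map_mul, aeval_C, he, div_mul_cancel₀ _ (aeval_ne_zero_of_transcendental ht hq)]
  by_contra hc
  rw [← hpoly, degree_C_mul hc] at hpq
  exact lt_irrefl _ hpq

theorem mem_simpleFractions_of_mem_sup (ht : Transcendental K t) {f : F}
    (hf : f ∈ simpleFractions ht ⊔ (algebraMap K F).range.toAddSubgroup)
    (hproper : f ∈ properFractions ht) : f ∈ simpleFractions ht := by
  obtain ⟨h, hh, _, ⟨c, rfl⟩, rfl⟩ := AddSubgroup.mem_sup.mp hf
  have hc : algebraMap K F c ∈ properFractions ht := by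
    simpa using sub_mem hproper (simpleFractions_le_properFractions ht hh)
  rw [eq_zero_of_algebraMap_mem_properFractions ht hc, map_zero, add_zero]
  exact hh

end Fractions

theorem Polynomial.coeff_implicitDeriv_C {A : Type*} [CommRing A] [Differential A] (τ : A)
    (p : A[X]) (n : ℕ) :
    (Differential.implicitDeriv (C τ) p).coeff n = (p.coeff n)′ + τ * (derivative p).coeff n := by
  simp [Differential.implicitDeriv]

theorem Polynomial.degree_implicitDeriv_C_sub_lt {K : Type*} [Field K] [Differential K] (τ : K)
    {p : K[X]} (hp : p ≠ 0) :
    (Differential.implicitDeriv (C τ) p -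
      C (Differential.logDeriv p.leadingCoeff) * p).degree < p.degree := by
  rw [degree_eq_natDegree hp, degree_lt_iff_coeff_zero]
  intro m hm
  have hder : (derivative p).coeff m = 0 :=
    coeff_eq_zero_of_degree_lt ((degree_derivative_lt hp).trans_le (by
      rw [degree_eq_natDegree hp]; exact_mod_cast hm))
  rw [coeff_sub, coeff_implicitDeriv_C, hder, coeff_C_mul]
  rcases hm.eq_or_lt with h | h
  · rw [← h, coeff_natDegree, Differential.logDeriv,
      div_mul_cancel₀ _ (leadingCoeff_ne_zero.mpr hp)]
    ring
  · rw [coeff_eq_zero_of_natDegree_lt h]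
    simp

section LogDeriv

variable {K F : Type*} [Field K] [Field F] [Algebra K F] [Differential K] [Differential F]
  [DifferentialAlgebra K F] {t : F} {τ : K}

theorem logDeriv_aeval_eq (ht : Transcendental K t) (hτ : t′ = algebraMap K F τ) {p : K[X]}
    (hp : p ≠ 0) :
    Differential.logDeriv (aeval t p) = algebraMap K F (Differential.logDeriv p.leadingCoeff) +
      aeval t (Differential.implicitDeriv (C τ) p - C (Differential.logDeriv p.leadingCoeff) * p) /
        aeval t p := by
  rw [Differential.logDeriv, Differential.deriv_aeval_eq_implicitDeriv t (C τ) (by rwa [aeval_C]),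
    map_sub, map_mul, aeval_C, sub_div,
    mul_div_cancel_right₀ _ (aeval_ne_zero_of_transcendental ht hp)]
  ring

theorem logDeriv_aeval_mem (ht : Transcendental K t) (hτ : t′ = algebraMap K F τ) (p : K[X]) :
    Differential.logDeriv (aeval t p) ∈
      simpleFractions ht ⊔ (algebraMap K F).range.toAddSubgroup := by
  induction p using UniqueFactorizationMonoid.induction_on_prime with
  | h₁ => simp
  | h₂ u hu =>
    obtain ⟨c, -, rfl⟩ := Polynomial.isUnit_iff.mp hu
    rw [aeval_C, Differential.logDeriv_algebraMap]
    exact AddSubgroup.mem_sup_right ⟨_, rfl⟩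
  | h₃ a p ha hp ih =>
    rw [map_mul, Differential.logDeriv_mul _ _ (aeval_ne_zero_of_transcendental ht hp.ne_zero)
      (aeval_ne_zero_of_transcendental ht ha), logDeriv_aeval_eq ht hτ hp.ne_zero,
      add_comm _ (_ / _)]
    refine add_mem (add_mem (AddSubgroup.mem_sup_left ?_) (AddSubgroup.mem_sup_right ⟨_, rfl⟩)) ih
    exact ⟨_, p, hp.ne_zero, degree_implicitDeriv_C_sub_lt τ hp.ne_zero,
      hp.irreducible.squarefree, rfl⟩

end LogDeriv

theorem exists_eq_aeval_div_aeval {F : Type*} [Field F] {K : Subfield F} {t : F}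
    (hgen : Subfield.closure ((K : Set F) ∪ {t}) = ⊤) (g : F) :
    ∃ A B : K[X], g = aeval t A / aeval t B := by
  rw [← IntermediateField.mem_adjoin_simple_iff, ← IntermediateField.mem_toSubfield,
    IntermediateField.adjoin_toSubfield]
  change g ∈ Subfield.closure (Set.range ((↑) : K → F) ∪ {t})
  rw [Subtype.range_coe, hgen]
  trivial

theorem proper_logarithmic_derivative_is_simple_general (F : Type*) [Field F]
    (δ : F → F)
    (hδadd : ∀ a b : F, δ (a + b) = δ a + δ b)
    (hδmul : ∀ a b : F, δ (a * b) = δ a * b + a * δ b)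
    (K : Subfield F) (hK : ∀ a ∈ K, δ a ∈ K)
    (t : F) (htr : Transcendental ↥K t) (ht : δ t ∈ K)
    (hgen : Subfield.closure ((K : Set F) ∪ {t}) = ⊤)
    (f : F)
    (hproper : ∃ p q : Polynomial ↥K, q ≠ 0 ∧ p.degree < q.degree ∧
      f = Polynomial.aeval t p / Polynomial.aeval t q)
    (hlog : ∃ g : F, g ≠ 0 ∧ f = δ g / g) :
    ∃ p q : Polynomial ↥K, q ≠ 0 ∧ p.degree < q.degree ∧ Squarefree q ∧
      f = Polynomial.aeval t p / Polynomial.aeval t q := by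
  let : Differential F := ⟨.ofLeibniz δ hδadd hδmul⟩
  let : Differential K := ⟨.ofLeibniz (fun a => ⟨δ a, hK a a.2⟩)
    (fun a b => Subtype.ext (hδadd a b)) (fun a b => Subtype.ext (hδmul a b))⟩
  have : DifferentialAlgebra K F := ⟨fun _ => rfl⟩
  obtain ⟨g, hg, rfl⟩ := hlog
  obtain ⟨A, B, rfl⟩ := exists_eq_aeval_div_aeval hgen g
  have hlogDeriv : δ (aeval t A / aeval t B) / (aeval t A / aeval t B) =
      Differential.logDeriv (aeval t A) - Differential.logDeriv (aeval t B) :=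
    Differential.logDeriv_div _ _ (div_ne_zero_iff.mp hg).1 (div_ne_zero_iff.mp hg).2
  have hτ : t′ = algebraMap K F ⟨δ t, ht⟩ := rfl
  refine mem_simpleFractions_of_mem_sup htr ?_ hproper
  rw [hlogDeriv]
  exact sub_mem (logDeriv_aeval_mem htr hτ A) (logDeriv_aeval_mem htr hτ B)

/-- Let `K` be a differential field of characteristic zero and `t` a primitive
generator over `K`, with `F = K(t)`.  If `f ∈ K(t)` is `t`-proper and is a
logarithmic derivative (`f = g′/g` for some nonzero `g ∈ K(t)`), then `f` is
`t`-simple, i.e. its denominator is squarefree. -/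
theorem proper_logarithmic_derivative_is_simple (F : Type*) [Field F] [CharZero F]
    (δ : F → F)
    (hδadd : ∀ a b : F, δ (a + b) = δ a + δ b)
    (hδmul : ∀ a b : F, δ (a * b) = δ a * b + a * δ b)
    (K : Subfield F) (hK : ∀ a ∈ K, δ a ∈ K)
    (t : F) (htr : Transcendental ↥K t) (ht : δ t ∈ K)
    (hgen : Subfield.closure ((K : Set F) ∪ {t}) = ⊤)
    (hnewconst : ∀ c : F, δ c = 0 → c ∈ K)
    (f : F)
    (hproper : ∃ p q : Polynomial ↥K, q ≠ 0 ∧ p.degree < q.degree ∧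
      f = Polynomial.aeval t p / Polynomial.aeval t q)
    (hlog : ∃ g : F, g ≠ 0 ∧ f = δ g / g) :
    ∃ p q : Polynomial ↥K, q ≠ 0 ∧ p.degree < q.degree ∧ Squarefree q ∧
      f = Polynomial.aeval t p / Polynomial.aeval t q :=
  proper_logarithmic_derivative_is_simple_general F δ hδadd hδmul K hK t htr ht hgen f hproper hlog
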